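/- arXiv:2405.11834 — 2 statements merged into one kernel-verified Lean document; each statement's English description precedes it below -/
import Mathlib

section
/- For generalized Pareto quantile functions Q_γ(u) = ((1−u)^{−γ} − 1)/γ with 0 < γ₁ ≤ γ₂, the ratio u ↦ Q_{γ₂}(u)/Q_{γ₁}(u) is nondecreasing on (0,1); i.e., GP(γ₁,1) ≤_* GP(γ₂,1) in the star-shaped order. -/
open Set

/-!
Substituting `x = (1 - u) ^ (-γ₁)`, which increases from `1` to `∞` on `(0, 1)`, turns the ratio
`Q_{γ₂}(u) / Q_{γ₁}(u)` into `(γ₁ / γ₂) · (x ^ c - 1) / (x - 1)` with `c = γ₂ / γ₁ ≥ 1`. This is a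
positive multiple of the slope of the secant of the convex function `x ↦ x ^ c` through `1`, and such
slopes increase with `x`.
-/

theorem monotoneOn_rpow_sub_one_div_sub_one {c : ℝ} (hc : 1 ≤ c) :
    MonotoneOn (fun x : ℝ => (x ^ c - 1) / (x - 1)) (Ici 0 \ {1}) := by
  rintro x ⟨hx₀, hx₁⟩ y ⟨hy₀, hy₁⟩ hxy
  simpa only [Real.one_rpow] using
    (convexOn_rpow hc).secant_mono (mem_Ici.2 zero_le_one) hx₀ hy₀ hx₁ hy₁ hxy

theorem monotoneOn_one_sub_rpow_neg {γ : ℝ} (hγ : 0 ≤ γ) :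
    MonotoneOn (fun u : ℝ => (1 - u) ^ (-γ)) (Iio 1) := fun u _ v hv huv =>
  Real.rpow_le_rpow_of_nonpos (sub_pos.2 hv) (by linarith) (neg_nonpos.2 hγ)

theorem one_lt_one_sub_rpow_neg {γ u : ℝ} (hγ : 0 < γ) (hu : u ∈ Ioo (0 : ℝ) 1) :
    1 < (1 - u) ^ (-γ) :=
  Real.one_lt_rpow_of_pos_of_lt_one_of_neg (by linarith [hu.2]) (by linarith [hu.1])
    (neg_neg_of_pos hγ)

theorem div_rpow_neg_sub_one_eq {s γ₁ γ₂ : ℝ} (hs : 0 < s) (hγ₁ : γ₁ ≠ 0) :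
    (s ^ (-γ₂) - 1) / γ₂ / ((s ^ (-γ₁) - 1) / γ₁) =
      γ₁ / γ₂ * (((s ^ (-γ₁)) ^ (γ₂ / γ₁) - 1) / (s ^ (-γ₁) - 1)) := by
  rw [← Real.rpow_mul hs.le, neg_mul, mul_div_cancel₀ _ hγ₁]
  field_simp

/-- For generalized Pareto quantile functions `Q_γ(u) = ((1-u)^(-γ) - 1)/γ` with
`0 < γ₁ ≤ γ₂`, the ratio `u ↦ Q_{γ₂}(u)/Q_{γ₁}(u)` is nondecreasing on `(0,1)`,
i.e. `GP(γ₁,1) ≤_* GP(γ₂,1)` in the star-shaped order. -/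
theorem generalized_pareto_star_order (γ₁ γ₂ : ℝ) (h₁ : 0 < γ₁) (h₁₂ : γ₁ ≤ γ₂)
    (Q : ℝ → ℝ → ℝ) (hQ : ∀ γ : ℝ, ∀ u ∈ Ioo (0 : ℝ) 1, Q γ u = ((1 - u) ^ (-γ) - 1) / γ) :
    ∀ u ∈ Ioo (0 : ℝ) 1, ∀ v ∈ Ioo (0 : ℝ) 1, u ≤ v →
      Q γ₂ u / Q γ₁ u ≤ Q γ₂ v / Q γ₁ v := by
  intro u hu v hv huv
  have mem_domain : ∀ w ∈ Ioo (0 : ℝ) 1, (1 - w) ^ (-γ₁) ∈ Ici 0 \ {1} := fun w hw =>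
    ⟨(Real.rpow_pos_of_pos (sub_pos.2 hw.2) _).le, (one_lt_one_sub_rpow_neg h₁ hw).ne'⟩
  rw [hQ γ₁ u hu, hQ γ₂ u hu, hQ γ₁ v hv, hQ γ₂ v hv,
    div_rpow_neg_sub_one_eq (sub_pos.2 hu.2) h₁.ne', div_rpow_neg_sub_one_eq (sub_pos.2 hv.2) h₁.ne']
  refine mul_le_mul_of_nonneg_left ?_ (div_nonneg h₁.le (h₁.trans_le h₁₂).le)
  exact monotoneOn_rpow_sub_one_div_sub_one ((one_le_div h₁).2 h₁₂) (mem_domain u hu)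
    (mem_domain v hv) (monotoneOn_one_sub_rpow_neg h₁.le hu.2 hv.2 huv)
end

section
/- Let X ~ Student's t distribution with ν degrees of freedom (stochastic representation X = N/√(Z/ν) with N standard normal, Z chi-squared with ν degrees of freedom, independent) and Y standard normal. Then Y ≤_* X in the star-shaped order, i.e. u ↦ F_X^{-1}(u)/F_Y^{-1}(u) is nondecreasing on (1/2, 1). -/
/-!
Write `Φ`, `φ` for the standard normal cdf and density and `G`, `g` for those of `X`. For fixed
`v` put `c = qX v / qY v` and `D x = Φ x - G (c x)`. Then `D` vanishes at `0`, at `∞` and at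
`qY v`, and `D' x = φ x - c g (c x)`. Up to an additive constant,
`log (c g (c x) / φ x) = x² / 2 - (ν + 1) / 2 * log (1 + c² x² / ν)`, a convex function of
`x²`, so `{x > 0 | D' x ≥ 0}` is an interval. The mean value theorem then forbids `D > 0`
anywhere on `(0, qY v]`, and `D (qY u) ≤ 0` is exactly `qX u ≤ c qY u`.

The density `g` of `X = N / √(Z / ν)` is obtained by mixing: given `Z = z`, `X` is centred
normal with variance `ν / z`, and integrating the Gaussian density against the gamma density of
`Z` leaves another gamma density times the Student `t` density.
-/

open MeasureTheory ProbabilityTheory Set Filter Topology Real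
open scoped NNReal ENNReal

lemma exists_lt_deriv_nonneg_of_tendsto {D D' : ℝ → ℝ} (hD : ∀ x, HasDerivAt D (D' x) x)
    {b : ℝ} (hb : D b = 0) (htop : Tendsto D atTop (𝓝 0)) : ∃ r, b < r ∧ 0 ≤ D' r := by
  by_contra! hneg
  have hanti : StrictAntiOn D (Ici b) :=
    strictAntiOn_of_hasDerivWithinAt_neg (convex_Ici b)
      (fun x _ => (hD x).continuousAt.continuousWithinAt)
      (fun x _ => (hD x).hasDerivWithinAt) (fun x hx => hneg x (by simpa using hx))
  have hlt : D (b + 1) < 0 :=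
    hb ▸ hanti (mem_Ici.2 le_rfl) (by simp : b ≤ b + 1) (by linarith)
  have hle : 0 ≤ D (b + 1) := le_of_tendsto htop <| (eventually_ge_atTop (b + 1)).mono
    fun x hx => hanti.antitoneOn (by simp : b ≤ b + 1) (mem_Ici.2 (by linarith)) hx
  linarith

theorem nonpos_of_ordConnected_nonneg_deriv {D D' : ℝ → ℝ} (hD : ∀ x, HasDerivAt D (D' x) x)
    (hconn : OrdConnected {x | 0 < x ∧ 0 ≤ D' x}) (h0 : D 0 = 0)
    (htop : Tendsto D atTop (𝓝 0)) {a b : ℝ} (ha : 0 < a) (hab : a ≤ b) (hb : D b = 0) :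
    D a ≤ 0 := by
  by_contra! hDa
  have hab : a < b := hab.lt_of_ne (by rintro rfl; exact hDa.ne' hb)
  have hcont : ∀ {s}, ContinuousOn D s := fun {_} x _ => (hD x).continuousAt.continuousWithinAt
  obtain ⟨p, hp, hDp⟩ := exists_hasDerivAt_eq_slope D D' ha hcont fun t _ => hD t
  obtain ⟨s, hs, hDs⟩ := exists_hasDerivAt_eq_slope D D' hab hcont fun t _ => hD t
  obtain ⟨r, hr, hDr⟩ := exists_lt_deriv_nonneg_of_tendsto hD hb htop
  have hp' : 0 ≤ D' p := by rw [hDp, h0]; exact div_nonneg (by linarith) (by linarith)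
  have hs' : D' s < 0 := by rw [hDs, hb]; exact div_neg_of_neg_of_pos (by linarith) (by linarith)
  have := (hconn.out ⟨hp.1, hp'⟩ ⟨by linarith [hs.1, hs.2, hr], hDr⟩
    ⟨(hp.2.trans hs.1).le, (hs.2.trans hr).le⟩).2
  linarith

theorem monotoneOn_div_quantile_of_ordConnected {F G f g qF qG : ℝ → ℝ} {l : ℝ}
    (hF : ∀ x, HasDerivAt F (f x) x) (hG : ∀ x, HasDerivAt G (g x) x)
    (hFmono : StrictMono F) (hGmono : StrictMono G) (hFG : G 0 = F 0)
    (hFtop : Tendsto F atTop (𝓝 l)) (hGtop : Tendsto G atTop (𝓝 l))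
    (hconn : ∀ c > 0, OrdConnected {x | 0 < x ∧ c * g (c * x) ≤ f x})
    {s : Set ℝ} (hs : s ⊆ Ioi (F 0)) (hqF : ∀ u ∈ s, F (qF u) = u)
    (hqG : ∀ u ∈ s, G (qG u) = u) :
    MonotoneOn (fun u => qG u / qF u) s := by
  intro u hu v hv huv
  have hqFu : 0 < qF u := hFmono.lt_iff_lt.1 <| by rw [hqF u hu]; exact hs hu
  have hqFuv : qF u ≤ qF v := hFmono.le_iff_le.1 <| by rw [hqF u hu, hqF v hv]; exact huv
  have hqGv : 0 < qG v := hGmono.lt_iff_lt.1 <| by rw [hqG v hv, hFG]; exact hs hv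
  set c := qG v / qF v
  have hc : 0 < c := div_pos hqGv (hqFu.trans_le hqFuv)
  have hD : ∀ x, HasDerivAt (fun x => F x - G (c * x)) (f x - c * g (c * x)) x := fun x => by
    have hGc : HasDerivAt (fun x => G (c * x)) (g (c * x) * c) x :=
      (hG (c * x)).comp x (by simpa using (hasDerivAt_id x).const_mul c)
    exact ((hF x).sub hGc).congr_deriv (by ring)
  have hcross : F (qF u) - G (c * qF u) ≤ 0 := by
    refine nonpos_of_ordConnected_nonneg_deriv hD ?_ (by simp [hFG]) ?_ hqFu hqFuv ?_
    · simpa only [sub_nonneg] using hconn c hc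
    · simpa using hFtop.sub (hGtop.comp (tendsto_id.const_mul_atTop hc))
    · rw [div_mul_cancel₀ _ (hqFu.trans_le hqFuv).ne', hqF v hv, hqG v hv, sub_self]
  have : qG u ≤ c * qF u := hGmono.le_iff_le.1 <| by rw [hqG u hu]; linarith [hqF u hu]
  exact (div_le_iff₀ hqFu).2 this

lemma measurable_gammaPDF (a r : ℝ) : Measurable (gammaPDF a r) :=
  (measurable_gammaPDFReal a r).ennreal_ofReal

lemma gammaMeasure_ae_pos (a r : ℝ) : ∀ᵐ z ∂gammaMeasure a r, 0 < z := by
  rw [gammaMeasure, ae_withDensity_iff (measurable_gammaPDF a r)]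
  filter_upwards [volume.ae_ne 0] with z hz hpdf
  exact hz.lt_or_gt.resolve_left fun h => hpdf (gammaPDF_of_neg h)

lemma gammaMeasure_ae_sqrt_div_pos {ν : ℝ} (hν : 0 < ν) (a r : ℝ) :
    ∀ᵐ z ∂gammaMeasure a r, 0 < √(z / ν) := by
  filter_upwards [gammaMeasure_ae_pos a r] with z hz using sqrt_pos.2 (div_pos hz hν)

lemma cdf_gaussianReal_self (m : ℝ) {v : ℝ≥0} (hv : v ≠ 0) :
    cdf (gaussianReal m v) m = 1 / 2 := by
  have := nullSingletonClass_gaussianReal (μ := m) hv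
  have hsymm : gaussianReal m v (Iic m) = gaussianReal m v (Ioi m) := by
    have hrefl : (gaussianReal m v).map (2 * m - ·) = gaussianReal m v := by
      rw [gaussianReal_map_const_sub]; ring_nf
    rw [measure_congr Ioi_ae_eq_Ici, ← hrefl, Measure.map_apply (by fun_prop) measurableSet_Ici,
      preimage_const_sub_Ici]
    congr 2
    ring
  have htotal := prob_add_prob_compl (μ := gaussianReal m v) (measurableSet_Iic (a := m))
  rw [compl_Iic, ← hsymm, ← two_mul, mul_comm] at htotal
  rw [cdf_eq_real, measureReal_def, ENNReal.eq_inv_of_mul_eq_one_left htotal]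
  norm_num

lemma ofReal_cdf_gaussianReal_mul (m : ℝ) {v : ℝ≥0} (hv : v ≠ 0) {s : ℝ} (hs : 0 < s)
    (x : ℝ) :
    ENNReal.ofReal (cdf (gaussianReal m v) (x * s)) =
      ∫⁻ w in Iic x, ENNReal.ofReal (s * gaussianPDFReal m v (s * w)) := by
  rw [ofReal_cdf, gaussianReal_apply _ hv, mul_comm, ← image_mul_left_Iic hs,
    lintegral_image_eq_lintegral_abs_deriv_mul measurableSet_Iic
      (fun w _ => by simpa using ((hasDerivAt_id w).const_mul s).hasDerivWithinAt)
      (mul_right_injective₀ hs.ne').injOn]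
  simp only [abs_of_pos hs, ENNReal.ofReal_mul hs.le, gaussianPDF]

lemma hasDerivAt_cdf_of_eq_withDensity {m : Measure ℝ} [IsProbabilityMeasure m] {ρ : ℝ → ℝ}
    (hm : m = volume.withDensity fun x => ENNReal.ofReal (ρ x)) (hρ : Continuous ρ)
    (hρ0 : ∀ x, 0 ≤ ρ x) (x : ℝ) : HasDerivAt (cdf m) (ρ x) x := by
  have hint : ∀ y, IntegrableOn ρ (Iic y) := fun y => ⟨hρ.aestronglyMeasurable, by
    rw [hasFiniteIntegral_iff_ofReal (ae_of_all _ hρ0), ← withDensity_apply _ measurableSet_Iic,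
      ← hm]
    exact measure_lt_top m _⟩
  have hcdf : ∀ y, cdf m y = ∫ w in Iic y, ρ w := fun y => by
    rw [cdf_eq_real, measureReal_def, hm, withDensity_apply _ measurableSet_Iic,
      ← ofReal_integral_eq_lintegral_ofReal (hint y) (ae_of_all _ hρ0),
      ENNReal.toReal_ofReal (integral_nonneg hρ0)]
  have hshift : ⇑(cdf m) = fun y => cdf m x + ∫ w in x..y, ρ w := funext fun y => by
    rw [hcdf y, hcdf x, ← intervalIntegral.integral_Iic_sub_Iic (hint x) (hint y)]
    ring
  rw [hshift]
  exact (intervalIntegral.integral_hasDerivAt_right (hρ.intervalIntegrable x x)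
    hρ.stronglyMeasurable.stronglyMeasurableAtFilter hρ.continuousAt).const_add _

noncomputable def studentTPDFReal (ν x : ℝ) : ℝ :=
  Gamma ((ν + 1) / 2) / (√(ν * π) * Gamma (ν / 2)) * (1 + x ^ 2 / ν) ^ (-((ν + 1) / 2))

lemma studentTPDFReal_pos {ν : ℝ} (hν : 0 < ν) (x : ℝ) : 0 < studentTPDFReal ν x := by
  have := Gamma_pos_of_pos (by linarith : 0 < (ν + 1) / 2)
  have := Gamma_pos_of_pos (by linarith : 0 < ν / 2)
  unfold studentTPDFReal
  positivity

lemma continuous_studentTPDFReal {ν : ℝ} (hν : 0 < ν) : Continuous (studentTPDFReal ν) :=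
  continuous_const.mul <| (by fun_prop : Continuous fun x : ℝ => 1 + x ^ 2 / ν).rpow_const
    fun x => Or.inl (by positivity)

-- At `z = 0` the right side need not vanish: for `ν = 1` it contains `0 ^ 0 = 1`.
lemma gammaPDFReal_mul_gaussianPDFReal_sqrt {ν z : ℝ} (hν : 0 < ν) (hz : z ≠ 0) (w : ℝ) :
    gammaPDFReal (ν / 2) (1 / 2) z * (√(z / ν) * gaussianPDFReal 0 1 (√(z / ν) * w)) =
      studentTPDFReal ν w * gammaPDFReal ((ν + 1) / 2) ((1 + w ^ 2 / ν) / 2) z := by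
  rcases hz.lt_or_gt with hz | hz
  · simp [gammaPDFReal, not_le.2 hz]
  have hb : 0 < 1 + w ^ 2 / ν := by positivity
  have hΓ₁ := Gamma_pos_of_pos (by linarith : 0 < ν / 2)
  have hΓ₂ := Gamma_pos_of_pos (by linarith : 0 < (ν + 1) / 2)
  have h2 : (2 : ℝ) ^ ((ν + 1) / 2) = 2 ^ (ν / 2) * √2 := by
    rw [sqrt_eq_rpow, ← rpow_add two_pos]; ring_nf
  have hz' : z ^ ((ν + 1) / 2 - 1) = z ^ (ν / 2 - 1) * √z := by
    rw [sqrt_eq_rpow, ← rpow_add hz]; ring_nf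
  have hexp : exp (-((1 + w ^ 2 / ν) / 2 * z)) =
      exp (-(1 / 2 * z)) * exp (-(z * w ^ 2 / ν) / 2) := by
    rw [← exp_add]; ring_nf
  simp only [gammaPDFReal, if_pos hz.le, gaussianPDFReal, studentTPDFReal, NNReal.coe_one,
    mul_one, sub_zero, hexp, hz', div_rpow hb.le zero_le_two, h2, rpow_neg hb.le, one_div,
    inv_rpow zero_le_two, sqrt_div' _ hν.le, sqrt_mul two_pos.le, sqrt_mul hν.le]
  have := rpow_pos_of_pos hb ((ν + 1) / 2)
  have := rpow_pos_of_pos two_pos (ν / 2)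
  have := sqrt_pos.2 hz
  have := sqrt_pos.2 hν
  have := sqrt_pos.2 pi_pos
  field_simp
  rw [sq_sqrt hz.le, sq_sqrt hν.le]
  ring_nf

lemma lintegral_ofReal_cdf_gaussianReal_mul_sqrt {ν : ℝ} (hν : 0 < ν) (x : ℝ) :
    ∫⁻ z, ENNReal.ofReal (cdf (gaussianReal 0 1) (x * √(z / ν)))
        ∂gammaMeasure (ν / 2) (1 / 2) =
      ∫⁻ w in Iic x, ENNReal.ofReal (studentTPDFReal ν w) := by
  have hscale : ∀ᵐ z ∂gammaMeasure (ν / 2) (1 / 2),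
      ENNReal.ofReal (cdf (gaussianReal 0 1) (x * √(z / ν))) =
        ∫⁻ w in Iic x,
          ENNReal.ofReal (√(z / ν) * gaussianPDFReal 0 1 (√(z / ν) * w)) := by
    filter_upwards [gammaMeasure_ae_pos _ _] with z hz
    exact ofReal_cdf_gaussianReal_mul 0 one_ne_zero (sqrt_pos.2 (div_pos hz hν)) x
  have := isProbabilityMeasure_gammaMeasure (a := ν / 2) (r := 1 / 2) (by positivity)
    (by norm_num)
  rw [lintegral_congr_ae hscale, lintegral_lintegral_swap (by fun_prop)]
  refine setLIntegral_congr_fun measurableSet_Iic fun w _ => ?_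
  have hmix : ∀ᵐ z, (gammaPDF (ν / 2) (1 / 2) * fun z =>
      ENNReal.ofReal (√(z / ν) * gaussianPDFReal 0 1 (√(z / ν) * w))) z =
        ENNReal.ofReal (studentTPDFReal ν w) *
          gammaPDF ((ν + 1) / 2) ((1 + w ^ 2 / ν) / 2) z := by
    filter_upwards [volume.ae_ne 0] with z hz
    rw [Pi.mul_apply, gammaPDF, gammaPDF,
      ← ENNReal.ofReal_mul (gammaPDFReal_nonneg (by positivity) (by norm_num) z),
      gammaPDFReal_mul_gaussianPDFReal_sqrt hν hz,
      ENNReal.ofReal_mul (studentTPDFReal_pos hν w).le]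
  rw [gammaMeasure, lintegral_withDensity_eq_lintegral_mul _ (measurable_gammaPDF _ _)
      (by fun_prop), lintegral_congr_ae hmix, lintegral_const_mul _ (measurable_gammaPDF _ _),
    lintegral_gammaPDF_eq_one (by positivity) (by positivity), mul_one]

section IndepQuotient

variable {Ω : Type*} [MeasurableSpace Ω] {μ : Measure Ω} [IsProbabilityMeasure μ]
  {N Z : Ω → ℝ}

lemma map_div_apply_Iic_eq_lintegral_cdf (hN : Measurable N) (hZ : Measurable Z)
    (hindep : IndepFun N Z μ) {g : ℝ → ℝ} (hg : Measurable g)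
    (hgpos : ∀ᵐ z ∂μ.map Z, 0 < g z) (x : ℝ) :
    μ.map (fun ω => N ω / g (Z ω)) (Iic x) =
      ∫⁻ z, ENNReal.ofReal (cdf (μ.map N) (x * g z)) ∂μ.map Z := by
  have := Measure.isProbabilityMeasure_map (μ := μ) hN.aemeasurable
  have hS : MeasurableSet {q : ℝ × ℝ | q.1 / g q.2 ≤ x} :=
    measurableSet_le (by fun_prop) measurable_const
  rw [Measure.map_apply (by fun_prop) measurableSet_Iic,
    show (fun ω => N ω / g (Z ω)) ⁻¹' Iic x =
      (fun ω => (N ω, Z ω)) ⁻¹' {q | q.1 / g q.2 ≤ x} from rfl,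
    ← Measure.map_apply (hN.prodMk hZ) hS,
    (indepFun_iff_map_prod_eq_prod_map_map hN.aemeasurable hZ.aemeasurable).1 hindep,
    Measure.prod_apply_symm hS]
  refine lintegral_congr_ae ?_
  filter_upwards [hgpos] with z hz
  rw [ofReal_cdf]
  congr 1
  ext n
  simp [div_le_iff₀ hz]

lemma cdf_map_div_zero (hN : Measurable N) (hZ : Measurable Z)
    (hindep : IndepFun N Z μ) {g : ℝ → ℝ} (hg : Measurable g)
    (hgpos : ∀ᵐ z ∂μ.map Z, 0 < g z) :
    cdf (μ.map fun ω => N ω / g (Z ω)) 0 = cdf (μ.map N) 0 := by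
  have := Measure.isProbabilityMeasure_map (μ := μ) hN.aemeasurable
  have := Measure.isProbabilityMeasure_map (μ := μ) hZ.aemeasurable
  have := Measure.isProbabilityMeasure_map (μ := μ) (f := fun ω => N ω / g (Z ω))
    (by fun_prop)
  rw [← ENNReal.ofReal_eq_ofReal_iff (cdf_nonneg _ _) (cdf_nonneg _ _), ofReal_cdf,
    map_div_apply_Iic_eq_lintegral_cdf hN hZ hindep hg hgpos]
  simp

variable {ν : ℝ}

theorem map_div_sqrt_apply_Iic (hν : 0 < ν) (hN : Measurable N) (hZ : Measurable Z)
    (hNlaw : μ.map N = gaussianReal 0 1) (hZlaw : μ.map Z = gammaMeasure (ν / 2) (1 / 2))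
    (hindep : IndepFun N Z μ) (x : ℝ) :
    μ.map (fun ω => N ω / √(Z ω / ν)) (Iic x) =
      ∫⁻ w in Iic x, ENNReal.ofReal (studentTPDFReal ν w) := by
  rw [map_div_apply_Iic_eq_lintegral_cdf (g := fun z => √(z / ν)) hN hZ hindep (by fun_prop)
    (hZlaw ▸ gammaMeasure_ae_sqrt_div_pos hν _ _) x, hNlaw, hZlaw,
    lintegral_ofReal_cdf_gaussianReal_mul_sqrt hν]

theorem map_div_sqrt_eq_withDensity_studentTPDFReal (hν : 0 < ν) (hN : Measurable N)
    (hZ : Measurable Z) (hNlaw : μ.map N = gaussianReal 0 1)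
    (hZlaw : μ.map Z = gammaMeasure (ν / 2) (1 / 2)) (hindep : IndepFun N Z μ) :
    μ.map (fun ω => N ω / √(Z ω / ν)) =
      volume.withDensity fun x => ENNReal.ofReal (studentTPDFReal ν x) := by
  have := Measure.isProbabilityMeasure_map (μ := μ) (f := fun ω => N ω / √(Z ω / ν))
    (by fun_prop)
  refine Measure.ext_of_Iic _ _ fun x => ?_
  rw [map_div_sqrt_apply_Iic hν hN hZ hNlaw hZlaw hindep, withDensity_apply _ measurableSet_Iic]

end IndepQuotient

lemma Set.OrdConnected.setOf_pos_sq_mem {S : Set ℝ} (hS : S.OrdConnected) :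
    {x : ℝ | 0 < x ∧ x ^ 2 ∈ S}.OrdConnected :=
  ⟨fun _ hx _ hz _ hy => ⟨hx.1.trans_le hy.1, hS.out hx.2 hz.2
    ⟨pow_le_pow_left₀ hx.1.le hy.1 2, pow_le_pow_left₀ (hx.1.le.trans hy.1) hy.2 2⟩⟩⟩

lemma concaveOn_mul_log_one_add_mul_sub {p γ : ℝ} (hp : 0 ≤ p) (hγ : 0 ≤ γ) :
    ConcaveOn ℝ (Ici 0) fun t => p * log (1 + γ * t) - t / 2 := by
  have hlog : ConcaveOn ℝ (Ici 0) fun t => log (1 + γ * t) := by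
    have hline : ∀ t : ℝ, AffineMap.lineMap 1 (1 + γ) t = 1 + γ * t := fun t => by
      rw [AffineMap.lineMap_apply_ring']; ring
    refine ((strictConcaveOn_log_Ioi.concaveOn.comp_affineMap
      (AffineMap.lineMap 1 (1 + γ))).subset (fun t ht => ?_) (convex_Ici 0)).congr fun t _ => ?_
    · simp only [mem_preimage, hline, mem_Ioi]
      have : 0 ≤ t := ht
      positivity
    · simp [hline]
  refine ((hlog.smul hp).sub
    ((LinearMap.lsmul ℝ ℝ (1 / 2 : ℝ)).convexOn (convex_Ici 0))).congr fun t _ => ?_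
  simp only [Pi.sub_apply, smul_eq_mul, LinearMap.lsmul_apply]
  ring

theorem ordConnected_mul_studentTPDFReal_le_gaussianPDFReal {ν c : ℝ} (hν : 0 < ν)
    (hc : 0 < c) :
    {x | 0 < x ∧ c * studentTPDFReal ν (c * x) ≤ gaussianPDFReal 0 1 x}.OrdConnected := by
  set C := Gamma ((ν + 1) / 2) / (√(ν * π) * Gamma (ν / 2))
  have hC : 0 < C := by
    have := Gamma_pos_of_pos (by linarith : 0 < (ν + 1) / 2)
    have := Gamma_pos_of_pos (by linarith : 0 < ν / 2)
    positivity
  have hlog : ∀ x, c * studentTPDFReal ν (c * x) ≤ gaussianPDFReal 0 1 x ↔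
      log (c * C) + log √(2 * π) ≤
        (ν + 1) / 2 * log (1 + c ^ 2 / ν * x ^ 2) - x ^ 2 / 2 := by
    intro x
    have h1 : 0 < 1 + c ^ 2 / ν * x ^ 2 := by positivity
    rw [← log_le_log_iff (mul_pos hc (studentTPDFReal_pos hν _))
      (gaussianPDFReal_pos _ _ _ one_ne_zero)]
    have hφ : gaussianPDFReal 0 1 x = (√(2 * π))⁻¹ * exp (-(x ^ 2 / 2)) := by
      simp [gaussianPDFReal, neg_div]
    rw [hφ, studentTPDFReal, show 1 + (c * x) ^ 2 / ν = 1 + c ^ 2 / ν * x ^ 2 by ring,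
      ← mul_assoc, log_mul (by positivity) (by positivity), log_rpow h1,
      log_mul (by positivity : (√(2 * π))⁻¹ ≠ 0) (exp_pos _).ne', log_inv, log_exp]
    constructor <;> intro h <;> linarith
  have hset : {x | 0 < x ∧ c * studentTPDFReal ν (c * x) ≤ gaussianPDFReal 0 1 x} =
      {x | 0 < x ∧ x ^ 2 ∈ {t ∈ Ici 0 | log (c * C) + log √(2 * π) ≤
        (ν + 1) / 2 * log (1 + c ^ 2 / ν * t) - t / 2}} := by
    ext x
    simp only [mem_ofPred_eq, hlog, mem_Ici, sq_nonneg, true_and]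
  rw [hset]
  exact ((concaveOn_mul_log_one_add_mul_sub (by linarith) (by positivity)).convex_ge
    _).ordConnected.setOf_pos_sq_mem

/-- Let `X = N / √(Z/ν)` have Student's t distribution with `ν` degrees of freedom
(`N` standard normal, `Z` chi-squared with `ν` degrees of freedom, i.e.
`Gamma(ν/2, 1/2)`, independent of `N`), and let `Y = N` be standard normal. Then
`Y ≤_* X` in the star-shaped order: the ratio of quantile functions
`u ↦ F_X⁻¹(u) / F_Y⁻¹(u)` is nondecreasing on `(1/2, 1)`. -/
theorem studentT_star_order_normal {Ω : Type*} [MeasurableSpace Ω]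
    (μ : Measure Ω) [IsProbabilityMeasure μ] (ν : ℕ) (hν : 0 < ν)
    (N Z : Ω → ℝ) (hN : Measurable N) (hZ : Measurable Z)
    (hNlaw : Measure.map N μ = gaussianReal 0 1)
    (hZlaw : Measure.map Z μ = gammaMeasure ((ν : ℝ) / 2) (1 / 2))
    (hindep : ProbabilityTheory.IndepFun N Z μ)
    (X : Ω → ℝ) (hX : ∀ ω, X ω = N ω / Real.sqrt (Z ω / ν))
    (qX qY : ℝ → ℝ)
    (hqX : ∀ u ∈ Ioo (0 : ℝ) 1, cdf (Measure.map X μ) (qX u) = u)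
    (hqY : ∀ u ∈ Ioo (0 : ℝ) 1, cdf (Measure.map N μ) (qY u) = u) :
    ∀ u ∈ Ioo (1 / 2 : ℝ) 1, ∀ v ∈ Ioo (1 / 2 : ℝ) 1, u ≤ v →
      qX u / qY u ≤ qX v / qY v := by
  have hνR : (0 : ℝ) < ν := by exact_mod_cast hν
  obtain rfl : X = fun ω => N ω / √(Z ω / ν) := funext hX
  have := Measure.isProbabilityMeasure_map (μ := μ) (f := fun ω => N ω / √(Z ω / ν))
    (by fun_prop)
  have hF := hasDerivAt_cdf_of_eq_withDensity (gaussianReal_of_var_ne_zero 0 one_ne_zero)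
    (by unfold gaussianPDFReal; fun_prop) (gaussianPDFReal_nonneg 0 1)
  have hG := hasDerivAt_cdf_of_eq_withDensity
    (map_div_sqrt_eq_withDensity_studentTPDFReal hνR hN hZ hNlaw hZlaw hindep)
    (continuous_studentTPDFReal hνR) fun x => (studentTPDFReal_pos hνR x).le
  have hs : Ioo (1 / 2 : ℝ) 1 ⊆ Ioo 0 1 := Ioo_subset_Ioo_left (by norm_num)
  rw [hNlaw] at hqY
  refine monotoneOn_div_quantile_of_ordConnected hF hG
    (strictMono_of_hasDerivAt_pos hF fun x => gaussianPDFReal_pos 0 1 x one_ne_zero)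
    (strictMono_of_hasDerivAt_pos hG (studentTPDFReal_pos hνR))
    (by rw [cdf_map_div_zero (g := fun z => √(z / ν)) hN hZ hindep (by fun_prop)
      (hZlaw ▸ gammaMeasure_ae_sqrt_div_pos hνR _ _), hNlaw])
    (tendsto_cdf_atTop _) (tendsto_cdf_atTop _)
    (fun c hc => ordConnected_mul_studentTPDFReal_le_gaussianPDFReal hνR hc)
    (by rw [cdf_gaussianReal_self 0 one_ne_zero]; exact Ioo_subset_Ioi_self)
    (fun u hu => hqY u (hs hu)) (fun u hu => hqX u (hs hu))
end
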